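/- (Non-confluence of the Frobenius semi-algebra system) The convex DPO rewriting relation ⇒_FS generated by FS1–FS4 is not confluent. Concretely, let G ← 2+2 be the monogamous acyclic interfaced Σ_FS-labelled hypergraph with input nodes a,b, output nodes c,d, internal nodes w1,w2,w3,w4, δ-hyperedges a→(w1,w2) and b→(w3,w4), and μ-hyperedges (w1,w3)→c and (w2,w4)→d. Then there are convex DPO steps G ⇒ H1 (applying FS3) and G ⇒ H2 (applying FS4) such that H1 and H2 admit no further convex DPO steps for any FS rule and are not isomorphic as interfaced hypergraphs; hence there is no K with H1 ⇒* K and H2 ⇒* K. -/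

import Mathlib

namespace SDRT

/-- A directed hypergraph: a set of nodes and, for each hyperedge, an ordered
list of source nodes and an ordered list of target nodes.  A `(k,l)`-hyperedge
is a hyperedge with `k` sources and `l` targets. -/
structure Hyp : Type 1 where
  V : Type
  E : Type
  src : E → List V
  tgt : E → List V

namespace Hyp

/-- The set of pairs `(h, i)` such that `v` is the `i`-th target of the hyperedge `h`.
The in-degree of `v` is the number of such pairs. -/
def inPairs (G : Hyp) (v : G.V) : Set (G.E × ℕ) := {p | (G.tgt p.1)[p.2]? = some v}

/-- The set of pairs `(h, j)` such that `v` is the `j`-th source of the hyperedge `h`.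
The out-degree of `v` is the number of such pairs. -/
def outPairs (G : Hyp) (v : G.V) : Set (G.E × ℕ) := {p | (G.src p.1)[p.2]? = some v}

/-- `v` has in-degree `0`. -/
def inDegZero (G : Hyp) (v : G.V) : Prop := G.inPairs v = ∅

/-- `v` has in-degree `1`. -/
def inDegOne (G : Hyp) (v : G.V) : Prop := ∃! p, p ∈ G.inPairs v

/-- `v` has out-degree `0`. -/
def outDegZero (G : Hyp) (v : G.V) : Prop := G.outPairs v = ∅

/-- `v` has out-degree `1`. -/
def outDegOne (G : Hyp) (v : G.V) : Prop := ∃! p, p ∈ G.outPairs v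

/-- `h'` is a successor of `h` if some node is both a target of `h` and a source of `h'`. -/
def Successor (G : Hyp) (h h' : G.E) : Prop := ∃ v, v ∈ G.tgt h ∧ v ∈ G.src h'

/-- `l` is a path (nonempty sequence of hyperedges, each a successor of the previous)
from the node `v` to the node `v'`: `v` is among the sources of the first hyperedge
and `v'` among the targets of the last one. -/
def PathFrom (G : Hyp) (l : List G.E) (v v' : G.V) : Prop :=
  ∃ hne : l ≠ [], l.Chain' G.Successor ∧ v ∈ G.src (l.head hne) ∧ v' ∈ G.tgt (l.getLast hne)

/-- `l` is a path from the hyperedge `h` to the hyperedge `h'`. -/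
def EdgePath (G : Hyp) (l : List G.E) (h h' : G.E) : Prop :=
  ∃ hne : l ≠ [], l.Chain' G.Successor ∧ l.head hne = h ∧ l.getLast hne = h'

/-- A hypergraph is acyclic if there is no path from a node to itself. -/
def Acyclic (G : Hyp) : Prop := ∀ (v : G.V) (l : List G.E), ¬ G.PathFrom l v v

end Hyp

/-- A subhypergraph: a set of nodes and hyperedges closed under taking the sources
and targets of its hyperedges. -/
structure SubHyp (G : Hyp) where
  nodes : Set G.V
  edges : Set G.E
  src_mem : ∀ e ∈ edges, ∀ v ∈ G.src e, v ∈ nodes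
  tgt_mem : ∀ e ∈ edges, ∀ v ∈ G.tgt e, v ∈ nodes

/-- A subhypergraph `H` of `G` is convex if every path in `G` between nodes of `H`
consists only of hyperedges of `H`. -/
def SubHyp.Convex {G : Hyp} (H : SubHyp G) : Prop :=
  ∀ v ∈ H.nodes, ∀ v' ∈ H.nodes, ∀ l, G.PathFrom l v v' → ∀ e ∈ l, e ∈ H.edges

/-- The hypergraph underlying a subhypergraph. -/
def SubHyp.toHyp {G : Hyp} (H : SubHyp G) : Hyp where
  V := H.nodes
  E := H.edges
  src := fun e => (G.src e.1).pmap (fun v hv => (⟨v, hv⟩ : H.nodes))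
    (fun v hv => H.src_mem e.1 e.2 v hv)
  tgt := fun e => (G.tgt e.1).pmap (fun v hv => (⟨v, hv⟩ : H.nodes))
    (fun v hv => H.tgt_mem e.1 e.2 v hv)

/-- A cospan of hypergraphs with discrete interfaces `m → G ← n`. -/
structure Cospan (m n : Type) : Type 1 where
  G : Hyp
  inp : m → G.V
  out : n → G.V

namespace Cospan

/-- A cospan is monogamous if both legs are injective, nodes in the image of the
input leg have in-degree 0, all other nodes have in-degree 1, nodes in the image
of the output leg have out-degree 0, and all other nodes have out-degree 1. -/
def Monogamous {m n : Type} (A : Cospan m n) : Prop :=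
  Function.Injective A.inp ∧ Function.Injective A.out ∧
  (∀ v ∈ Set.range A.inp, A.G.inDegZero v) ∧
  (∀ v ∉ Set.range A.inp, A.G.inDegOne v) ∧
  (∀ v ∈ Set.range A.out, A.G.outDegZero v) ∧
  (∀ v ∉ Set.range A.out, A.G.outDegOne v)

/-- A cospan is acyclic if its carrier is. -/
def Acyclic {m n : Type} (A : Cospan m n) : Prop := A.G.Acyclic

/-- Composition of cospans by pushout: glue `G` and `H` along the common
interface `n`, identifying `A.out k` with `B.inp k` for every `k : n`. -/
def comp {m n p : Type} (A : Cospan m n) (B : Cospan n p) : Cospan m p where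
  G := { V := Quot (fun x y : A.G.V ⊕ B.G.V =>
                      ∃ k : n, x = Sum.inl (A.out k) ∧ y = Sum.inr (B.inp k))
         E := A.G.E ⊕ B.G.E
         src := Sum.elim (fun e => (A.G.src e).map (fun v => Quot.mk _ (Sum.inl v)))
                         (fun e => (B.G.src e).map (fun v => Quot.mk _ (Sum.inr v)))
         tgt := Sum.elim (fun e => (A.G.tgt e).map (fun v => Quot.mk _ (Sum.inl v)))
                         (fun e => (B.G.tgt e).map (fun v => Quot.mk _ (Sum.inr v))) }
  inp := fun x => Quot.mk _ (Sum.inl (A.inp x))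
  out := fun y => Quot.mk _ (Sum.inr (B.out y))

/-- Monoidal product (tensor) of cospans: disjoint union of the carriers, with
the evident interface maps. -/
def tensor {m₁ n₁ m₂ n₂ : Type} (A : Cospan m₁ n₁) (B : Cospan m₂ n₂) :
    Cospan (m₁ ⊕ m₂) (n₁ ⊕ n₂) where
  G := { V := A.G.V ⊕ B.G.V
         E := A.G.E ⊕ B.G.E
         src := Sum.elim (fun e => (A.G.src e).map Sum.inl) (fun e => (B.G.src e).map Sum.inr)
         tgt := Sum.elim (fun e => (A.G.tgt e).map Sum.inl) (fun e => (B.G.tgt e).map Sum.inr) }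
  inp := Sum.elim (fun x => Sum.inl (A.inp x)) (fun x => Sum.inr (B.inp x))
  out := Sum.elim (fun y => Sum.inl (A.out y)) (fun y => Sum.inr (B.out y))

/-- The identity cospan on `k`: the discrete hypergraph on `k` with identity legs. -/
def idCospan (k : Type) : Cospan k k where
  G := { V := k, E := Empty, src := Empty.elim, tgt := Empty.elim }
  inp := id
  out := id

end Cospan

/-- An isomorphism of cospans: a hypergraph isomorphism of the carriers commuting
with the interface legs. -/
structure CospanIso {m n : Type} (A B : Cospan m n) where
  nodeEquiv : A.G.V ≃ B.G.V
  edgeEquiv : A.G.E ≃ B.G.E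
  src_eq : ∀ e, B.G.src (edgeEquiv e) = (A.G.src e).map nodeEquiv
  tgt_eq : ∀ e, B.G.tgt (edgeEquiv e) = (A.G.tgt e).map nodeEquiv
  inp_eq : ∀ x, nodeEquiv (A.inp x) = B.inp x
  out_eq : ∀ y, nodeEquiv (A.out y) = B.out y

/-- Two cospans are isomorphic if there is an isomorphism between them. -/
def Cospan.Isomorphic {m n : Type} (A B : Cospan m n) : Prop := Nonempty (CospanIso A B)

/-- A homomorphism of hypergraphs: maps nodes to nodes and hyperedges to
hyperedges, preserving the ordered lists of sources and targets. -/
structure HypHom (G H : Hyp) where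
  nodeMap : G.V → H.V
  edgeMap : G.E → H.E
  src_eq : ∀ e, H.src (edgeMap e) = (G.src e).map nodeMap
  tgt_eq : ∀ e, H.tgt (edgeMap e) = (G.tgt e).map nodeMap

/-- The image of a hypergraph homomorphism, as a subhypergraph of the codomain. -/
def HypHom.image {G H : Hyp} (f : HypHom G H) : SubHyp H where
  nodes := Set.range f.nodeMap
  edges := Set.range f.edgeMap
  src_mem := by
    rintro e ⟨e', rfl⟩ v hv
    rw [f.src_eq] at hv
    rcases List.mem_map.mp hv with ⟨w, -, rfl⟩
    exact ⟨w, rfl⟩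
  tgt_mem := by
    rintro e ⟨e', rfl⟩ v hv
    rw [f.tgt_eq] at hv
    rcases List.mem_map.mp hv with ⟨w, -, rfl⟩
    exact ⟨w, rfl⟩


/-! ### Labelled hypergraphs -/

/-- A monoidal signature: a set of operation symbols, each with an arity and a
coarity. -/
structure MonSig : Type 1 where
  ops : Type
  ar : ops → ℕ
  coar : ops → ℕ

/-- A `Σ`-labelled hypergraph: each hyperedge carries a label whose arity and
coarity match the numbers of sources and targets of the hyperedge. -/
structure LHyp (S : MonSig) extends Hyp where
  label : E → S.ops
  src_len : ∀ e, (src e).length = S.ar (label e)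
  tgt_len : ∀ e, (tgt e).length = S.coar (label e)

/-- A homomorphism of `Σ`-labelled hypergraphs. -/
structure LHom {S : MonSig} (G H : LHyp S) where
  nodeMap : G.V → H.V
  edgeMap : G.E → H.E
  src_eq : ∀ e, H.src (edgeMap e) = (G.src e).map nodeMap
  tgt_eq : ∀ e, H.tgt (edgeMap e) = (G.tgt e).map nodeMap
  label_eq : ∀ e, H.label (edgeMap e) = G.label e

/-- Composition (diagrammatic order) of homomorphisms. -/
def LHom.comp {S : MonSig} {G H K : LHyp S} (f : LHom G H) (g : LHom H K) : LHom G K where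
  nodeMap := g.nodeMap ∘ f.nodeMap
  edgeMap := g.edgeMap ∘ f.edgeMap
  src_eq := by intro e; simp only [Function.comp_apply, g.src_eq, f.src_eq, List.map_map]
  tgt_eq := by intro e; simp only [Function.comp_apply, g.tgt_eq, f.tgt_eq, List.map_map]
  label_eq := by intro e; simp only [Function.comp_apply, g.label_eq, f.label_eq]

/-- The underlying homomorphism of unlabelled hypergraphs. -/
def LHom.toHypHom {S : MonSig} {G H : LHyp S} (f : LHom G H) : HypHom G.toHyp H.toHyp :=
  ⟨f.nodeMap, f.edgeMap, f.src_eq, f.tgt_eq⟩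

/-- The discrete `Σ`-labelled hypergraph on a set `I` of nodes (no hyperedges). -/
def discreteLHyp (S : MonSig) (I : Type) : LHyp S where
  V := I
  E := Empty
  src := Empty.elim
  tgt := Empty.elim
  label := fun e => e.elim
  src_len := fun e => e.elim
  tgt_len := fun e => e.elim

/-- A homomorphism out of a discrete hypergraph is just a function on nodes. -/
def discreteHom {S : MonSig} {I : Type} (C : LHyp S) (c : I → C.V) :
    LHom (discreteLHyp S I) C where
  nodeMap := c
  edgeMap := Empty.elim
  src_eq := fun e => e.elim
  tgt_eq := fun e => e.elim
  label_eq := fun e => e.elim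

/-- The square `f ; inA = g ; inB` is a pushout of `Σ`-labelled hypergraphs. -/
def IsPushout {S : MonSig} {X A B P : LHyp S} (f : LHom X A) (g : LHom X B)
    (inA : LHom A P) (inB : LHom B P) : Prop :=
  f.comp inA = g.comp inB ∧
  ∀ (W : LHyp S) (u : LHom A W) (w : LHom B W), f.comp u = g.comp w →
    ∃! t : LHom P W, inA.comp t = u ∧ inB.comp t = w

/-- A cospan of `Σ`-labelled hypergraphs with discrete interfaces. -/
structure LCospan (S : MonSig) (m n : Type) : Type 1 where
  G : LHyp S
  inp : m → G.V
  out : n → G.V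

namespace LCospan

/-- The underlying unlabelled cospan. -/
def toCospan {S : MonSig} {m n : Type} (A : LCospan S m n) : Cospan m n :=
  ⟨A.G.toHyp, A.inp, A.out⟩

def Monogamous {S : MonSig} {m n : Type} (A : LCospan S m n) : Prop := A.toCospan.Monogamous

def Acyclic {S : MonSig} {m n : Type} (A : LCospan S m n) : Prop := A.G.toHyp.Acyclic

/-- Composition of labelled cospans by pushout (gluing along the common interface). -/
def comp {S : MonSig} {m n p : Type} (A : LCospan S m n) (B : LCospan S n p) :
    LCospan S m p where
  G := { V := Quot (fun x y : A.G.V ⊕ B.G.V =>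
                      ∃ k : n, x = Sum.inl (A.out k) ∧ y = Sum.inr (B.inp k))
         E := A.G.E ⊕ B.G.E
         src := Sum.elim (fun e => (A.G.src e).map (fun v => Quot.mk _ (Sum.inl v)))
                         (fun e => (B.G.src e).map (fun v => Quot.mk _ (Sum.inr v)))
         tgt := Sum.elim (fun e => (A.G.tgt e).map (fun v => Quot.mk _ (Sum.inl v)))
                         (fun e => (B.G.tgt e).map (fun v => Quot.mk _ (Sum.inr v)))
         label := Sum.elim A.G.label B.G.label
         src_len := by rintro (e | e) <;> simp [A.G.src_len, B.G.src_len]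
         tgt_len := by rintro (e | e) <;> simp [A.G.tgt_len, B.G.tgt_len] }
  inp := fun x => Quot.mk _ (Sum.inl (A.inp x))
  out := fun y => Quot.mk _ (Sum.inr (B.out y))

/-- Monoidal product (disjoint union) of labelled cospans. -/
def tensor {S : MonSig} {m₁ n₁ m₂ n₂ : Type} (A : LCospan S m₁ n₁) (B : LCospan S m₂ n₂) :
    LCospan S (m₁ ⊕ m₂) (n₁ ⊕ n₂) where
  G := { V := A.G.V ⊕ B.G.V
         E := A.G.E ⊕ B.G.E
         src := Sum.elim (fun e => (A.G.src e).map Sum.inl) (fun e => (B.G.src e).map Sum.inr)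
         tgt := Sum.elim (fun e => (A.G.tgt e).map Sum.inl) (fun e => (B.G.tgt e).map Sum.inr)
         label := Sum.elim A.G.label B.G.label
         src_len := by rintro (e | e) <;> simp [A.G.src_len, B.G.src_len]
         tgt_len := by rintro (e | e) <;> simp [A.G.tgt_len, B.G.tgt_len] }
  inp := Sum.elim (fun x => Sum.inl (A.inp x)) (fun x => Sum.inr (B.inp x))
  out := Sum.elim (fun y => Sum.inl (A.out y)) (fun y => Sum.inr (B.out y))

/-- Reindexing of the interfaces of a cospan along functions. -/
def reind {S : MonSig} {m n m' n' : Type} (A : LCospan S m n) (f : m' → m) (g : n' → n) :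
    LCospan S m' n' :=
  ⟨A.G, A.inp ∘ f, A.out ∘ g⟩

end LCospan

/-- An isomorphism of labelled cospans. -/
structure LCospanIso {S : MonSig} {m n : Type} (A B : LCospan S m n) where
  nodeEquiv : A.G.V ≃ B.G.V
  edgeEquiv : A.G.E ≃ B.G.E
  src_eq : ∀ e, B.G.src (edgeEquiv e) = (A.G.src e).map nodeEquiv
  tgt_eq : ∀ e, B.G.tgt (edgeEquiv e) = (A.G.tgt e).map nodeEquiv
  label_eq : ∀ e, B.G.label (edgeEquiv e) = A.G.label e
  inp_eq : ∀ x, nodeEquiv (A.inp x) = B.inp x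
  out_eq : ∀ y, nodeEquiv (A.out y) = B.out y

/-- `A` is a monogamous acyclic cospan. -/
def MonAcyclic {S : MonSig} {m n : Type} (A : LCospan S m n) : Prop :=
  A.Monogamous ∧ A.Acyclic

/-- `(C, c, g)` is a pushout complement of the mono `f : L → G` along the
interface `i + j → L` of the rule. -/
def IsPushoutComplement {S : MonSig} {i j n m : Type} (L : LCospan S i j) (Gc : LCospan S n m)
    (f : LHom L.G Gc.G) (C : LHyp S) (c : i ⊕ j → C.V) (g : LHom C Gc.G) : Prop :=
  IsPushout (discreteHom L.G (Sum.elim L.inp L.out)) (discreteHom C c) f g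

/-- `(C, c, g)` is a boundary complement: a pushout complement in which `c` is mono
and there are `d₁ : n → C`, `d₂ : m → C` commuting with the interface of `G` such
that the cospan `j + n → C ← m + i` is monogamous. -/
def IsBoundaryComplement {S : MonSig} {i j n m : Type} (L : LCospan S i j) (Gc : LCospan S n m)
    (f : LHom L.G Gc.G) (C : LHyp S) (c : i ⊕ j → C.V) (g : LHom C Gc.G) : Prop :=
  IsPushoutComplement L Gc f C c g ∧ Function.Injective c ∧
  ∃ (d₁ : n → C.V) (d₂ : m → C.V),
    (∀ x, g.nodeMap (d₁ x) = Gc.inp x) ∧ (∀ y, g.nodeMap (d₂ y) = Gc.out y) ∧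
    (LCospan.mk C (Sum.elim (fun y : j => c (Sum.inr y)) d₁)
                  (Sum.elim d₂ (fun x : i => c (Sum.inl x)))).Monogamous

/-- A convex DPO rewriting step from `D ← n+m` to `E ← n+m` using the rule
`L ← i+j → R`: a mono matching `f : L → D` with convex image, and a boundary
(pushout) complement `C` such that pasting `R` back along `i+j` yields `E`,
with all interfaces preserved. -/
def ConvexStep {S : MonSig} {i j n m : Type} (Lr Rr : LCospan S i j)
    (D E : LCospan S n m) : Prop :=
  ∃ (f : LHom Lr.G D.G) (C : LHyp S) (c : i ⊕ j → C.V) (q : n ⊕ m → C.V)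
    (g : LHom C D.G) (r : LHom Rr.G E.G) (h : LHom C E.G),
    Function.Injective f.nodeMap ∧ Function.Injective f.edgeMap ∧
    f.toHypHom.image.Convex ∧
    IsPushout (discreteHom Lr.G (Sum.elim Lr.inp Lr.out)) (discreteHom C c) f g ∧
    IsPushout (discreteHom Rr.G (Sum.elim Rr.inp Rr.out)) (discreteHom C c) r h ∧
    (∀ x, g.nodeMap (q (Sum.inl x)) = D.inp x) ∧
    (∀ y, g.nodeMap (q (Sum.inr y)) = D.out y) ∧
    (∀ x, h.nodeMap (q (Sum.inl x)) = E.inp x) ∧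
    (∀ y, h.nodeMap (q (Sum.inr y)) = E.out y) ∧
    Function.Injective c ∧
    (LCospan.mk C (Sum.elim (fun y : j => c (Sum.inr y)) (fun x : n => q (Sum.inl x)))
                  (Sum.elim (fun y : m => q (Sum.inr y)) (fun x : i => c (Sum.inl x)))).Monogamous

/-! ### The signature of Frobenius semi-algebras and its rewriting rules -/

inductive FSOp : Type
  | mu : FSOp
  | delta : FSOp
deriving DecidableEq

/-- The signature with a multiplication `μ : 2 → 1` and a comultiplication `δ : 1 → 2`. -/
def SFS : MonSig where
  ops := FSOp
  ar := fun o => match o with | .mu => 2 | .delta => 1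
  coar := fun o => match o with | .mu => 1 | .delta => 2

/-- Left-hand side of FS1 (associativity): `μ(a,b) → x`, `μ(x,c) → y`;
inputs `(a,b,c)`, output `y`. -/
def FS1L : LCospan SFS (Fin 3) (Fin 1) where
  G := { V := Fin 5, E := Fin 2
         src := ![[0, 1], [3, 2]], tgt := ![[3], [4]]
         label := fun _ => .mu
         src_len := by decide, tgt_len := by decide }
  inp := ![0, 1, 2]
  out := ![4]

/-- Right-hand side of FS1: `μ(b,c) → z`, `μ(a,z) → y`. -/
def FS1R : LCospan SFS (Fin 3) (Fin 1) where
  G := { V := Fin 5, E := Fin 2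
         src := ![[1, 2], [0, 3]], tgt := ![[3], [4]]
         label := fun _ => .mu
         src_len := by decide, tgt_len := by decide }
  inp := ![0, 1, 2]
  out := ![4]

/-- Left-hand side of FS2 (coassociativity): `δ(a) → (x,c₃)`, `δ(x) → (c₁,c₂)`;
input `a`, outputs `(c₁,c₂,c₃)`. -/
def FS2L : LCospan SFS (Fin 1) (Fin 3) where
  G := { V := Fin 5, E := Fin 2
         src := ![[0], [1]], tgt := ![[1, 4], [2, 3]]
         label := fun _ => .delta
         src_len := by decide, tgt_len := by decide }
  inp := ![0]
  out := ![2, 3, 4]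

/-- Right-hand side of FS2: `δ(a) → (c₁,x)`, `δ(x) → (c₂,c₃)`. -/
def FS2R : LCospan SFS (Fin 1) (Fin 3) where
  G := { V := Fin 5, E := Fin 2
         src := ![[0], [1]], tgt := ![[2, 1], [3, 4]]
         label := fun _ => .delta
         src_len := by decide, tgt_len := by decide }
  inp := ![0]
  out := ![2, 3, 4]

/-- Left-hand side of FS3 (Frobenius): `δ(a) → (c,w)`, `μ(w,b) → d`;
inputs `(a,b)`, outputs `(c,d)`. -/
def FS3L : LCospan SFS (Fin 2) (Fin 2) where
  G := { V := Fin 5, E := Fin 2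
         src := ![[0], [4, 1]], tgt := ![[2, 4], [3]]
         label := ![.delta, .mu]
         src_len := by decide, tgt_len := by decide }
  inp := ![0, 1]
  out := ![2, 3]

/-- Left-hand side of FS4 (Frobenius): `δ(b) → (w,d)`, `μ(a,w) → c`;
inputs `(a,b)`, outputs `(c,d)`. -/
def FS4L : LCospan SFS (Fin 2) (Fin 2) where
  G := { V := Fin 5, E := Fin 2
         src := ![[1], [0, 4]], tgt := ![[4, 3], [2]]
         label := ![.delta, .mu]
         src_len := by decide, tgt_len := by decide }
  inp := ![0, 1]
  out := ![2, 3]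

/-- Common right-hand side of FS3 and FS4: `μ(a,b) → w`, `δ(w) → (c,d)`. -/
def FS34R : LCospan SFS (Fin 2) (Fin 2) where
  G := { V := Fin 5, E := Fin 2
         src := ![[0, 1], [4]], tgt := ![[4], [2, 3]]
         label := ![.mu, .delta]
         src_len := by decide, tgt_len := by decide }
  inp := ![0, 1]
  out := ![2, 3]

/-- A convex DPO step on monogamous acyclic interfaced hypergraphs using FS1 or FS2. -/
def StepFS12 {n m : Type} (D E : LCospan SFS n m) : Prop :=
  MonAcyclic D ∧ MonAcyclic E ∧
    (ConvexStep FS1L FS1R D E ∨ ConvexStep FS2L FS2R D E)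

/-- A convex DPO step on monogamous acyclic interfaced hypergraphs using FS3 or FS4. -/
def StepFS34 {n m : Type} (D E : LCospan SFS n m) : Prop :=
  MonAcyclic D ∧ MonAcyclic E ∧
    (ConvexStep FS3L FS34R D E ∨ ConvexStep FS4L FS34R D E)

/-- A convex DPO step using any of the rules FS1–FS4. -/
def StepFS {n m : Type} (D E : LCospan SFS n m) : Prop :=
  StepFS12 D E ∨ StepFS34 D E

/-! ### Trees, L-weights, and the counting functions for termination -/

/-- The `o`-tree rooted at the node `x`: the set of `o`-labelled hyperedges
admitting a path to `x` consisting solely of `o`-labelled hyperedges. -/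
def muTree {S : MonSig} (o : S.ops) (G : LHyp S) (x : G.V) : Set G.E :=
  {h | G.label h = o ∧ ∃ (l : List G.E) (hne : l ≠ []), l.Chain' G.toHyp.Successor ∧
        (∀ e ∈ l, G.label e = o) ∧ l.head hne = h ∧ x ∈ G.tgt (l.getLast hne)}

/-- The `o`-cotree rooted at the node `x`: the set of `o`-labelled hyperedges
admitting a path from `x` consisting solely of `o`-labelled hyperedges. -/
def deltaTree {S : MonSig} (o : S.ops) (G : LHyp S) (x : G.V) : Set G.E :=
  {h | G.label h = o ∧ ∃ (l : List G.E) (hne : l ≠ []), l.Chain' G.toHyp.Successor ∧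
        (∀ e ∈ l, G.label e = o) ∧ x ∈ G.src (l.head hne) ∧ l.getLast hne = h}

/-- The set whose cardinality is the L-weight `ℓ(h)`: for a `μ`-hyperedge the
`μ`-tree rooted at its first source, for a `δ`-hyperedge the `δ`-tree rooted at
its first target, and empty otherwise. -/
def lset {S : MonSig} (mo de : S.ops) (G : LHyp S) (h : G.E) : Set G.E :=
  {h' | (G.label h = mo ∧ ∃ x, (G.src h)[0]? = some x ∧ h' ∈ muTree mo G x) ∨
        (G.label h = de ∧ ∃ x, (G.tgt h)[0]? = some x ∧ h' ∈ deltaTree de G x)}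

/-- The L-weight `ℓ(h)` of a hyperedge. -/
noncomputable def lweight {S : MonSig} (mo de : S.ops) (G : LHyp S) (h : G.E) : ℕ := (lset mo de G h).ncard

/-- `ℒ(G)`: the sum over all hyperedges of their L-weights. -/
noncomputable def Lw {S : MonSig} (mo de : S.ops) (G : LHyp S) : ℕ := ∑ᶠ h, lweight mo de G h

/-- `𝒟(G)`: the set of pairs `(h, h')` with `h` a `(2,1)`- (i.e. `μ`-) hyperedge
and `h'` a `(1,2)`- (i.e. `δ`-) hyperedge such that no path from `h` to `h'` exists. -/
def Dset (G : LHyp SFS) : Set (G.E × G.E) :=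
  {p | G.label p.1 = .mu ∧ G.label p.2 = .delta ∧ ¬ ∃ l, G.toHyp.EdgePath l p.1 p.2}

/-- `|𝒟(G)|`. -/
noncomputable def Dcard (G : LHyp SFS) : ℕ := (Dset G).ncard

/-- The counterexample hypergraph: inputs `a = 0`, `b = 1`, outputs `c = 2`, `d = 3`,
internal nodes `w₁,…,w₄ = 4,…,7`, with `δ(a) → (w₁,w₂)`, `δ(b) → (w₃,w₄)`,
`μ(w₁,w₃) → c` and `μ(w₂,w₄) → d`. -/
def GFrob : LCospan SFS (Fin 2) (Fin 2) where
  G := { V := Fin 8, E := Fin 4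
         src := ![[0], [1], [4, 6], [5, 7]], tgt := ![[4, 5], [6, 7], [2], [3]]
         label := ![.delta, .delta, .mu, .mu]
         src_len := by decide, tgt_len := by decide }
  inp := ![0, 1]
  out := ![2, 3]

/-!
Both Frobenius rules apply to `GFrob`: FS3 to `δ(a) → (w₁,w₂)`, `μ(w₂,w₄) → d` and FS4 to
`δ(b) → (w₃,w₄)`, `μ(w₁,w₃) → c`. The left-hand side of every rule is a pair of hyperedges in
which a fixed target of the first is a fixed source of the second, so a convex match yields such
a linked pair in the host, with every path from its targets to its sources running inside it.
In each result no two μ- or two δ-hyperedges are linked, and every linked δ-μ pair is linked at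
the wrong positions for FS3 and FS4 except one, which is not convex; so both results are normal
forms. They are not isomorphic, since the input `a` feeds a μ-hyperedge in one and only a
δ-hyperedge in the other, and distinct normal forms have no common reduct.
-/

/-! ### Degrees and acyclicity -/

instance decidableExistsUniqueOfFintype {α : Type*} [Fintype α] [DecidableEq α] (p : α → Prop)
    [DecidablePred p] : Decidable (∃! a, p a) :=
  inferInstanceAs (Decidable (∃ a, p a ∧ ∀ b, p b → b = a))

theorem setOf_getElem?_eq_some_eq_empty_iff {E V : Type} (ℓ : E → List V) (v : V) :
    {p : E × ℕ | (ℓ p.1)[p.2]? = some v} = ∅ ↔ ∀ e, v ∉ ℓ e := by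
  simp [Set.eq_empty_iff_forall_notMem, List.mem_iff_getElem?]

theorem existsUnique_getElem?_eq_some_iff {E V : Type} (ℓ : E → List V) (v : V) :
    (∃! p : E × ℕ, (ℓ p.1)[p.2]? = some v) ↔
      ∃! p : (e : E) × Fin (ℓ e).length, (ℓ p.1)[p.2] = v := by
  let toPair : ((e : E) × Fin (ℓ e).length) → E × ℕ := fun p => (p.1, p.2)
  have toPair_injective : Function.Injective toPair := by
    rintro ⟨e, i⟩ ⟨e', i'⟩ h
    simp only [toPair, Prod.mk.injEq] at h
    obtain ⟨rfl, h⟩ := h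
    rw [Fin.ext h]
  have getElem?_toPair : ∀ q, (ℓ (toPair q).1)[(toPair q).2]? = some v ↔ (ℓ q.1)[q.2] = v := by
    rintro ⟨e, i⟩
    simp [toPair]
  have exists_toPair : ∀ p : E × ℕ, (ℓ p.1)[p.2]? = some v → ∃ q, toPair q = p := by
    rintro ⟨e, i⟩ h
    exact ⟨⟨e, i, (List.getElem?_eq_some_iff.1 h).1⟩, rfl⟩
  constructor
  · rintro ⟨p, hp, huniq⟩
    obtain ⟨q, rfl⟩ := exists_toPair p hp
    exact ⟨q, (getElem?_toPair q).1 hp,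
      fun q' hq' => toPair_injective (huniq _ ((getElem?_toPair q').2 hq'))⟩
  · rintro ⟨q, hq, huniq⟩
    refine ⟨toPair q, (getElem?_toPair q).2 hq, fun p hp => ?_⟩
    obtain ⟨q', rfl⟩ := exists_toPair p hp
    rw [huniq q' ((getElem?_toPair q').1 hp)]

namespace Hyp

variable (G : Hyp)

theorem inDegZero_iff (v : G.V) : G.inDegZero v ↔ ∀ e, v ∉ G.tgt e :=
  setOf_getElem?_eq_some_eq_empty_iff G.tgt v

theorem outDegZero_iff (v : G.V) : G.outDegZero v ↔ ∀ e, v ∉ G.src e :=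
  setOf_getElem?_eq_some_eq_empty_iff G.src v

theorem inDegOne_iff (v : G.V) :
    G.inDegOne v ↔ ∃! p : (e : G.E) × Fin (G.tgt e).length, (G.tgt p.1)[p.2] = v :=
  existsUnique_getElem?_eq_some_iff G.tgt v

theorem outDegOne_iff (v : G.V) :
    G.outDegOne v ↔ ∃! p : (e : G.E) × Fin (G.src e).length, (G.src p.1)[p.2] = v :=
  existsUnique_getElem?_eq_some_iff G.src v

section Decidable

variable [Fintype G.E] [DecidableEq G.E] [DecidableEq G.V] (v : G.V)

instance : Decidable (G.inDegZero v) := decidable_of_iff _ (G.inDegZero_iff v).symm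

instance : Decidable (G.outDegZero v) := decidable_of_iff _ (G.outDegZero_iff v).symm

instance : Decidable (G.inDegOne v) := decidable_of_iff _ (G.inDegOne_iff v).symm

instance : Decidable (G.outDegOne v) := decidable_of_iff _ (G.outDegOne_iff v).symm

end Decidable

instance [DecidableEq G.V] : DecidableRel G.Successor :=
  fun h h' => inferInstanceAs (Decidable (∃ v ∈ G.tgt h, v ∈ G.src h'))

theorem PathFrom.rank_lt {G : Hyp} {rk : G.V → ℕ}
    (hrk : ∀ e, ∀ u ∈ G.src e, ∀ w ∈ G.tgt e, rk u < rk w) {l : List G.E} {v v' : G.V}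
    (hl : G.PathFrom l v v') : rk v < rk v' := by
  induction l generalizing v with
  | nil => exact absurd rfl hl.1
  | cons a t ih =>
    obtain ⟨hne, hchain, hv, hv'⟩ := hl
    cases t with
    | nil => exact hrk a v hv v' hv'
    | cons b t =>
      obtain ⟨⟨x, hxa, hxb⟩, hchain⟩ := List.isChain_cons_cons.1 hchain
      exact (hrk a v hv x hxa).trans (ih ⟨List.cons_ne_nil _ _, hchain, hxb, hv'⟩)

theorem acyclic_of_rank (rk : G.V → ℕ)
    (hrk : ∀ e, ∀ u ∈ G.src e, ∀ w ∈ G.tgt e, rk u < rk w) : G.Acyclic :=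
  fun _ _ hl => (PathFrom.rank_lt hrk hl).false

end Hyp

instance Cospan.decidableMonogamous {m n : Type} [Fintype m] [DecidableEq m] [Fintype n]
    [DecidableEq n] (A : Cospan m n) [Fintype A.G.V] [DecidableEq A.G.V] [Fintype A.G.E]
    [DecidableEq A.G.E] : Decidable A.Monogamous := by
  unfold Cospan.Monogamous
  infer_instance

instance LCospan.decidableMonogamous {S : MonSig} {m n : Type} [Fintype m] [DecidableEq m]
    [Fintype n] [DecidableEq n] (A : LCospan S m n) [Fintype A.G.V] [DecidableEq A.G.V]
    [Fintype A.G.E] [DecidableEq A.G.E] : Decidable A.Monogamous := by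
  unfold LCospan.Monogamous LCospan.toCospan
  infer_instance

/-! ### Gluing -/

theorem LHom.ext {S : MonSig} {G H : LHyp S} {f g : LHom G H} (hn : f.nodeMap = g.nodeMap)
    (he : f.edgeMap = g.edgeMap) : f = g := by
  cases f; cases g; cases hn; cases he; rfl

theorem exists_comp_eq_of_injective_of_cover {α β γ δ : Type*} {f : α → γ} {g : β → γ}
    (hf : Function.Injective f) (hg : Function.Injective g)
    (hcover : ∀ x, x ∈ Set.range f ∨ x ∈ Set.range g) {u : α → δ} {w : β → δ}
    (hagree : ∀ a b, f a = g b → u a = w b) : ∃ t : γ → δ, t ∘ f = u ∧ t ∘ g = w := by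
  classical
  refine ⟨fun x => if hx : x ∈ Set.range g then w hx.choose
    else u ((hcover x).resolve_right hx).choose, funext fun a => ?_, funext fun b => ?_⟩
  · by_cases ha : f a ∈ Set.range g
    · simp only [Function.comp_apply, dif_pos ha]
      exact (hagree a _ ha.choose_spec.symm).symm
    · simp only [Function.comp_apply, dif_neg ha]
      exact congrArg u (hf ((hcover (f a)).resolve_right ha).choose_spec)
  · have hb : g b ∈ Set.range g := ⟨b, rfl⟩
    simp only [Function.comp_apply, dif_pos hb]
    exact congrArg w (hg hb.choose_spec)

/-- `f` and `g` exhibit `D` as the union of copies of `L` and `C` that overlap exactly in the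
nodes `ℓ k = c k`. -/
structure IsGluing {S : MonSig} {ι : Type} {L C D : LHyp S} (ℓ : ι → L.V) (c : ι → C.V)
    (f : LHom L D) (g : LHom C D) : Prop where
  comm : ∀ k, f.nodeMap (ℓ k) = g.nodeMap (c k)
  nodeMap_left_injective : Function.Injective f.nodeMap
  nodeMap_right_injective : Function.Injective g.nodeMap
  edgeMap_left_injective : Function.Injective f.edgeMap
  edgeMap_right_injective : Function.Injective g.edgeMap
  node_cover : ∀ v, v ∈ Set.range f.nodeMap ∨ v ∈ Set.range g.nodeMap
  edge_cover : ∀ e, e ∈ Set.range f.edgeMap ∨ e ∈ Set.range g.edgeMap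
  edge_disjoint : ∀ a b, f.edgeMap a ≠ g.edgeMap b
  node_overlap : ∀ a b, f.nodeMap a = g.nodeMap b → ∃ k, a = ℓ k ∧ b = c k

namespace IsGluing

variable {S : MonSig} {ι : Type} {L C D : LHyp S} {ℓ : ι → L.V} {c : ι → C.V}
  {f : LHom L D} {g : LHom C D}

theorem hom_ext (hfg : IsGluing ℓ c f g) {W : LHyp S} {t t' : LHom D W}
    (hf : f.comp t = f.comp t') (hg : g.comp t = g.comp t') : t = t' := by
  apply LHom.ext
  · funext v
    rcases hfg.node_cover v with ⟨a, rfl⟩ | ⟨b, rfl⟩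
    · exact congrFun (congrArg LHom.nodeMap hf) a
    · exact congrFun (congrArg LHom.nodeMap hg) b
  · funext e
    rcases hfg.edge_cover e with ⟨a, rfl⟩ | ⟨b, rfl⟩
    · exact congrFun (congrArg LHom.edgeMap hf) a
    · exact congrFun (congrArg LHom.edgeMap hg) b

theorem exists_lift (hfg : IsGluing ℓ c f g) {W : LHyp S} {u : LHom L W} {w : LHom C W}
    (huw : ∀ k, u.nodeMap (ℓ k) = w.nodeMap (c k)) :
    ∃ t : LHom D W, f.comp t = u ∧ g.comp t = w := by
  obtain ⟨tN, htNf, htNg⟩ := exists_comp_eq_of_injective_of_cover hfg.nodeMap_left_injective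
    hfg.nodeMap_right_injective hfg.node_cover (u := u.nodeMap) (w := w.nodeMap) fun a b hab => by
      obtain ⟨k, rfl, rfl⟩ := hfg.node_overlap a b hab
      exact huw k
  obtain ⟨tE, htEf, htEg⟩ := exists_comp_eq_of_injective_of_cover hfg.edgeMap_left_injective
    hfg.edgeMap_right_injective hfg.edge_cover (u := u.edgeMap) (w := w.edgeMap)
    fun a b hab => absurd hab (hfg.edge_disjoint a b)
  have map_f (l : List L.V) : (l.map f.nodeMap).map tN = l.map u.nodeMap := by
    rw [List.map_map, htNf]
  have map_g (l : List C.V) : (l.map g.nodeMap).map tN = l.map w.nodeMap := by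
    rw [List.map_map, htNg]
  have apply_f (a : L.E) : tE (f.edgeMap a) = u.edgeMap a := congrFun htEf a
  have apply_g (b : C.E) : tE (g.edgeMap b) = w.edgeMap b := congrFun htEg b
  refine ⟨⟨tN, tE, fun e => ?_, fun e => ?_, fun e => ?_⟩, LHom.ext htNf htEf,
    LHom.ext htNg htEg⟩ <;> rcases hfg.edge_cover e with ⟨a, rfl⟩ | ⟨b, rfl⟩
  · rw [apply_f, u.src_eq, f.src_eq, map_f]
  · rw [apply_g, w.src_eq, g.src_eq, map_g]
  · rw [apply_f, u.tgt_eq, f.tgt_eq, map_f]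
  · rw [apply_g, w.tgt_eq, g.tgt_eq, map_g]
  · rw [apply_f, u.label_eq, f.label_eq]
  · rw [apply_g, w.label_eq, g.label_eq]

theorem isPushout (hfg : IsGluing ℓ c f g) :
    IsPushout (discreteHom L ℓ) (discreteHom C c) f g := by
  refine ⟨LHom.ext (funext hfg.comm) (funext fun e => e.elim), fun W u w huw => ?_⟩
  obtain ⟨t, htu, htw⟩ := hfg.exists_lift (congrFun (congrArg LHom.nodeMap huw))
  exact ⟨t, ⟨htu, htw⟩, fun t' ⟨ht'u, ht'w⟩ =>
    hfg.hom_ext (ht'u.trans htu.symm) (ht'w.trans htw.symm)⟩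

end IsGluing

/-! ### Convexity and matches of linked pairs -/

theorem SubHyp.convex_of_short_paths {G : Hyp} (H : SubHyp G)
    (hshort : ∀ a b c, G.Successor a b → ¬ G.Successor b c)
    (h₁ : ∀ a, ∀ v ∈ G.src a, ∀ v' ∈ G.tgt a, v ∈ H.nodes → v' ∈ H.nodes → a ∈ H.edges)
    (h₂ : ∀ a b, G.Successor a b → ∀ v ∈ G.src a, ∀ v' ∈ G.tgt b,
      v ∈ H.nodes → v' ∈ H.nodes → a ∈ H.edges ∧ b ∈ H.edges) :
    H.Convex := by
  rintro v hv v' hv' l ⟨hne, hchain, hsrc, htgt⟩ e he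
  match l, hchain, he with
  | [a], _, he =>
    rw [List.mem_singleton.1 he]
    exact h₁ a v hsrc v' htgt hv hv'
  | [a, b], hchain, he =>
    have hab := h₂ a b (List.isChain_pair.1 hchain) v hsrc v' htgt hv hv'
    rcases List.mem_pair.1 he with rfl | rfl
    exacts [hab.1, hab.2]
  | a :: b :: c :: _, hchain, _ =>
    obtain ⟨hab, hchain⟩ := List.isChain_cons_cons.1 hchain
    exact absurd (List.isChain_cons_cons.1 hchain).1 (hshort a b c hab)

def LHyp.Links {S : MonSig} (D : LHyp S) (p q : ℕ) (a b : D.E) : Prop :=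
  ∃ v, (D.tgt a)[p]? = some v ∧ (D.src b)[q]? = some v

instance {S : MonSig} (D : LHyp S) [Fintype D.V] [DecidableEq D.V] (p q : ℕ) (a b : D.E) :
    Decidable (D.Links p q a b) := by
  unfold LHyp.Links
  infer_instance

theorem LHom.links {S : MonSig} {L D : LHyp S} (f : LHom L D) {p q : ℕ} {a b : L.E}
    (h : L.Links p q a b) : D.Links p q (f.edgeMap a) (f.edgeMap b) := by
  obtain ⟨v, ha, hb⟩ := h
  exact ⟨f.nodeMap v, by rw [f.tgt_eq, List.getElem?_map, ha, Option.map_some],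
    by rw [f.src_eq, List.getElem?_map, hb, Option.map_some]⟩

def LHyp.IsLinkedPair {S : MonSig} (L : LHyp S) (o₀ o₁ : S.ops) (p q : ℕ) : Prop :=
  ∃ e₀ e₁, (∀ e, e = e₀ ∨ e = e₁) ∧ L.label e₀ = o₀ ∧ L.label e₁ = o₁ ∧ L.Links p q e₀ e₁

theorem ConvexStep.exists_links {S : MonSig} {i j n m : Type} {L R : LCospan S i j}
    {D E : LCospan S n m} {o₀ o₁ : S.ops} {p q : ℕ} (hL : L.G.IsLinkedPair o₀ o₁ p q)
    (hs : ConvexStep L R D E) :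
    ∃ a b, D.G.label a = o₀ ∧ D.G.label b = o₁ ∧ D.G.Links p q a b ∧
      ∀ x ∈ D.G.tgt a, ∀ y ∈ D.G.src b, ∀ l, D.G.toHyp.PathFrom l x y →
        ∀ e ∈ l, e = a ∨ e = b := by
  obtain ⟨e₀, e₁, hE, h₀, h₁, hlink⟩ := hL
  obtain ⟨f, -, -, -, -, -, -, -, -, hconv, -⟩ := hs
  refine ⟨f.edgeMap e₀, f.edgeMap e₁, (f.label_eq e₀).trans h₀, (f.label_eq e₁).trans h₁,
    f.links hlink, fun x hx y hy l hl e he => ?_⟩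
  rw [f.tgt_eq] at hx
  rw [f.src_eq] at hy
  obtain ⟨x, -, rfl⟩ := List.mem_map.1 hx
  obtain ⟨y, -, rfl⟩ := List.mem_map.1 hy
  obtain ⟨e', rfl⟩ := hconv _ ⟨x, rfl⟩ _ ⟨y, rfl⟩ l hl e he
  rcases hE e' with rfl | rfl
  exacts [Or.inl rfl, Or.inr rfl]

theorem not_convexStep_of_forall_not_links {S : MonSig} {i j n m : Type} {L R : LCospan S i j}
    {D E : LCospan S n m} {o₀ o₁ : S.ops} {p q : ℕ} (hL : L.G.IsLinkedPair o₀ o₁ p q)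
    (hD : ∀ a b, D.G.label a = o₀ → D.G.label b = o₁ → ¬ D.G.Links p q a b) :
    ¬ ConvexStep L R D E := fun hs => by
  obtain ⟨a, b, ha, hb, hab, -⟩ := hs.exists_links hL
  exact hD a b ha hb hab

/-! ### Isomorphisms of cospans -/

theorem LCospanIso.exists_inp_mem_src {S : MonSig} {m n : Type} {A B : LCospan S m n}
    (φ : LCospanIso A B) {x : m} {e : A.G.E} (h : A.inp x ∈ A.G.src e) :
    ∃ e', B.inp x ∈ B.G.src e' ∧ B.G.label e' = A.G.label e :=
  ⟨φ.edgeEquiv e, by rw [φ.src_eq, ← φ.inp_eq]; exact List.mem_map_of_mem h, φ.label_eq e⟩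

def LCospanIso.refl {S : MonSig} {m n : Type} (A : LCospan S m n) : LCospanIso A A :=
  ⟨Equiv.refl _, Equiv.refl _, fun _ => List.map_id _ |>.symm, fun _ => List.map_id _ |>.symm,
    fun _ => rfl, fun _ => rfl, fun _ => rfl⟩

/-! ### The two rewrites of `GFrob` -/

/-- FS3 replaces `δ(a) → (w₁,w₂)`, `μ(w₂,w₄) → d` by `μ(a,w₄) → x`, `δ(x) → (w₁,d)`;
the new node `x` takes the number `5` of `w₂`. -/
abbrev GFrobFS3 : LCospan SFS (Fin 2) (Fin 2) where
  G := { V := Fin 8, E := Fin 4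
         src := ![[1], [4, 6], [0, 7], [5]], tgt := ![[6, 7], [2], [5], [4, 3]]
         label := ![.delta, .mu, .mu, .delta]
         src_len := by decide, tgt_len := by decide }
  inp := ![0, 1]
  out := ![2, 3]

/-- FS4 replaces `δ(b) → (w₃,w₄)`, `μ(w₁,w₃) → c` by `μ(w₁,b) → x`, `δ(x) → (c,w₄)`;
the new node `x` takes the number `6` of `w₃`. -/
abbrev GFrobFS4 : LCospan SFS (Fin 2) (Fin 2) where
  G := { V := Fin 8, E := Fin 4
         src := ![[0], [5, 7], [4, 1], [6]], tgt := ![[4, 5], [3], [6], [2, 7]]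
         label := ![.delta, .mu, .mu, .delta]
         src_len := by decide, tgt_len := by decide }
  inp := ![0, 1]
  out := ![2, 3]

/-- `GFrob` without the redex of FS3 and its internal node `w₂`. -/
abbrev ctxFS3 : LHyp SFS where
  V := Fin 7
  E := Fin 2
  src := ![[1], [4, 5]]
  tgt := ![[5, 6], [2]]
  label := ![.delta, .mu]
  src_len := by decide
  tgt_len := by decide

/-- `GFrob` without the redex of FS4 and its internal node `w₃`. -/
abbrev ctxFS4 : LHyp SFS where
  V := Fin 7
  E := Fin 2
  src := ![[0], [5, 6]]
  tgt := ![[4, 5], [3]]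
  label := ![.delta, .mu]
  src_len := by decide
  tgt_len := by decide

def ctxInterface : Fin 2 ⊕ Fin 2 → Fin 7 := Sum.elim ![0, 1] ![2, 3]

def matchFS3 : LHom FS3L.G GFrob.G where
  nodeMap := (![0, 7, 4, 3, 5] : Fin 5 → Fin 8)
  edgeMap := (![0, 3] : Fin 2 → Fin 4)
  src_eq := Fin.forall_fin_two.2 ⟨rfl, rfl⟩
  tgt_eq := Fin.forall_fin_two.2 ⟨rfl, rfl⟩
  label_eq := Fin.forall_fin_two.2 ⟨rfl, rfl⟩

def comatchFS3 : LHom FS34R.G GFrobFS3.G where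
  nodeMap := (![0, 7, 4, 3, 5] : Fin 5 → Fin 8)
  edgeMap := ![2, 3]
  src_eq := Fin.forall_fin_two.2 ⟨rfl, rfl⟩
  tgt_eq := Fin.forall_fin_two.2 ⟨rfl, rfl⟩
  label_eq := Fin.forall_fin_two.2 ⟨rfl, rfl⟩

def ctxFS3ToGFrob : LHom ctxFS3 GFrob.G where
  nodeMap := (![0, 1, 2, 3, 4, 6, 7] : Fin 7 → Fin 8)
  edgeMap := (![1, 2] : Fin 2 → Fin 4)
  src_eq := Fin.forall_fin_two.2 ⟨rfl, rfl⟩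
  tgt_eq := Fin.forall_fin_two.2 ⟨rfl, rfl⟩
  label_eq := Fin.forall_fin_two.2 ⟨rfl, rfl⟩

def ctxFS3ToGFrobFS3 : LHom ctxFS3 GFrobFS3.G where
  nodeMap := (![0, 1, 2, 3, 4, 6, 7] : Fin 7 → Fin 8)
  edgeMap := ![0, 1]
  src_eq := Fin.forall_fin_two.2 ⟨rfl, rfl⟩
  tgt_eq := Fin.forall_fin_two.2 ⟨rfl, rfl⟩
  label_eq := Fin.forall_fin_two.2 ⟨rfl, rfl⟩

def matchFS4 : LHom FS4L.G GFrob.G where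
  nodeMap := (![4, 1, 2, 7, 6] : Fin 5 → Fin 8)
  edgeMap := (![1, 2] : Fin 2 → Fin 4)
  src_eq := Fin.forall_fin_two.2 ⟨rfl, rfl⟩
  tgt_eq := Fin.forall_fin_two.2 ⟨rfl, rfl⟩
  label_eq := Fin.forall_fin_two.2 ⟨rfl, rfl⟩

def comatchFS4 : LHom FS34R.G GFrobFS4.G where
  nodeMap := (![4, 1, 2, 7, 6] : Fin 5 → Fin 8)
  edgeMap := ![2, 3]
  src_eq := Fin.forall_fin_two.2 ⟨rfl, rfl⟩
  tgt_eq := Fin.forall_fin_two.2 ⟨rfl, rfl⟩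
  label_eq := Fin.forall_fin_two.2 ⟨rfl, rfl⟩

def ctxFS4ToGFrob : LHom ctxFS4 GFrob.G where
  nodeMap := (![0, 1, 2, 3, 4, 5, 7] : Fin 7 → Fin 8)
  edgeMap := (![0, 3] : Fin 2 → Fin 4)
  src_eq := Fin.forall_fin_two.2 ⟨rfl, rfl⟩
  tgt_eq := Fin.forall_fin_two.2 ⟨rfl, rfl⟩
  label_eq := Fin.forall_fin_two.2 ⟨rfl, rfl⟩

def ctxFS4ToGFrobFS4 : LHom ctxFS4 GFrobFS4.G where
  nodeMap := (![0, 1, 2, 3, 4, 5, 7] : Fin 7 → Fin 8)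
  edgeMap := ![0, 1]
  src_eq := Fin.forall_fin_two.2 ⟨rfl, rfl⟩
  tgt_eq := Fin.forall_fin_two.2 ⟨rfl, rfl⟩
  label_eq := Fin.forall_fin_two.2 ⟨rfl, rfl⟩

theorem GFrob_monAcyclic : MonAcyclic GFrob :=
  ⟨by unfold GFrob; decide,
    GFrob.G.toHyp.acyclic_of_rank ![0, 0, 2, 2, 1, 1, 1, 1] (by unfold GFrob; decide)⟩

theorem GFrobFS3_monAcyclic : MonAcyclic GFrobFS3 :=
  ⟨by decide, GFrobFS3.G.toHyp.acyclic_of_rank ![0, 0, 4, 3, 3, 2, 1, 1] (by decide)⟩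

theorem GFrobFS4_monAcyclic : MonAcyclic GFrobFS4 :=
  ⟨by decide, GFrobFS4.G.toHyp.acyclic_of_rank ![0, 0, 3, 4, 1, 1, 2, 3] (by decide)⟩

theorem GFrob_convexStep_FS3 : ConvexStep FS3L FS34R GFrob GFrobFS3 := by
  unfold FS3L FS34R GFrob
  refine ⟨matchFS3, ctxFS3, Sum.elim ![0, 6] ![4, 3], ctxInterface, ctxFS3ToGFrob, comatchFS3,
    ctxFS3ToGFrobFS3, by decide, by decide, ?_, ?_, ?_, by decide, by decide, by decide, by decide,
    by decide, by decide⟩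
  · refine SubHyp.convex_of_short_paths _ (by decide) ?_ ?_ <;>
      unfold HypHom.image LHom.toHypHom <;> decide
  all_goals exact IsGluing.isPushout (by constructor <;> decide)

theorem GFrob_convexStep_FS4 : ConvexStep FS4L FS34R GFrob GFrobFS4 := by
  unfold FS4L FS34R GFrob
  refine ⟨matchFS4, ctxFS4, Sum.elim ![4, 1] ![2, 6], ctxInterface, ctxFS4ToGFrob, comatchFS4,
    ctxFS4ToGFrobFS4, by decide, by decide, ?_, ?_, ?_, by decide, by decide, by decide, by decide,
    by decide, by decide⟩
  · refine SubHyp.convex_of_short_paths _ (by decide) ?_ ?_ <;>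
      unfold HypHom.image LHom.toHypHom <;> decide
  all_goals exact IsGluing.isPushout (by constructor <;> decide)

/-! ### Normal forms -/

-- Unfolding `SFS` exposes `SFS.ops = FSOp` to instance search, so `decide` can compare labels.
theorem FS1L_isLinkedPair : FS1L.G.IsLinkedPair .mu .mu 0 0 := by
  unfold FS1L SFS LHyp.IsLinkedPair; decide

theorem FS2L_isLinkedPair : FS2L.G.IsLinkedPair .delta .delta 0 0 := by
  unfold FS2L SFS LHyp.IsLinkedPair; decide

theorem FS3L_isLinkedPair : FS3L.G.IsLinkedPair .delta .mu 1 0 := by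
  unfold FS3L SFS LHyp.IsLinkedPair; decide

theorem FS4L_isLinkedPair : FS4L.G.IsLinkedPair .delta .mu 0 1 := by
  unfold FS4L SFS LHyp.IsLinkedPair; decide

/-- The only δ-μ pair linked as in FS4 is `δ(b) → (w₃,w₄)`, `μ(w₁,w₃) → c`, and it is not
convex: `w₄ → x → w₁` leaves it. -/
theorem GFrobFS3_not_convexStep_FS4 (K : LCospan SFS (Fin 2) (Fin 2)) :
    ¬ ConvexStep FS4L FS34R GFrobFS3 K := fun hs => by
  obtain ⟨a, b, ha, hb, hab, hconv⟩ := hs.exists_links FS4L_isLinkedPair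
  have hunique : ∀ a b, GFrobFS3.G.label a = .delta → GFrobFS3.G.label b = .mu →
      GFrobFS3.G.Links 0 1 a b → a = 0 ∧ b = 1 := by
    unfold SFS; decide
  obtain ⟨rfl, rfl⟩ := hunique a b ha hb hab
  have hpath : GFrobFS3.G.toHyp.PathFrom [2, 3] 7 4 :=
    ⟨List.cons_ne_nil _ _, List.isChain_pair.2 (by decide), by decide, by decide⟩
  exact absurd (hconv 7 (by decide) 4 (by decide) _ hpath 2 (by simp)) (by decide)

theorem GFrobFS4_not_convexStep_FS3 (K : LCospan SFS (Fin 2) (Fin 2)) :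
    ¬ ConvexStep FS3L FS34R GFrobFS4 K := fun hs => by
  obtain ⟨a, b, ha, hb, hab, hconv⟩ := hs.exists_links FS3L_isLinkedPair
  have hunique : ∀ a b, GFrobFS4.G.label a = .delta → GFrobFS4.G.label b = .mu →
      GFrobFS4.G.Links 1 0 a b → a = 0 ∧ b = 1 := by
    unfold SFS; decide
  obtain ⟨rfl, rfl⟩ := hunique a b ha hb hab
  have hpath : GFrobFS4.G.toHyp.PathFrom [2, 3] 4 7 :=
    ⟨List.cons_ne_nil _ _, List.isChain_pair.2 (by decide), by decide, by decide⟩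
  exact absurd (hconv 4 (by decide) 7 (by decide) _ hpath 2 (by simp)) (by decide)

theorem GFrobFS3_not_stepFS : ∀ K, ¬ StepFS GFrobFS3 K := by
  rintro K (⟨-, -, hs | hs⟩ | ⟨-, -, hs | hs⟩)
  · exact not_convexStep_of_forall_not_links FS1L_isLinkedPair (by unfold SFS; decide) hs
  · exact not_convexStep_of_forall_not_links FS2L_isLinkedPair (by unfold SFS; decide) hs
  · exact not_convexStep_of_forall_not_links FS3L_isLinkedPair (by unfold SFS; decide) hs
  · exact GFrobFS3_not_convexStep_FS4 K hs

theorem GFrobFS4_not_stepFS : ∀ K, ¬ StepFS GFrobFS4 K := by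
  rintro K (⟨-, -, hs | hs⟩ | ⟨-, -, hs | hs⟩)
  · exact not_convexStep_of_forall_not_links FS1L_isLinkedPair (by unfold SFS; decide) hs
  · exact not_convexStep_of_forall_not_links FS2L_isLinkedPair (by unfold SFS; decide) hs
  · exact GFrobFS4_not_convexStep_FS3 K hs
  · exact not_convexStep_of_forall_not_links FS4L_isLinkedPair (by unfold SFS; decide) hs

/-- In `GFrobFS3` the input `a` feeds a μ-hyperedge, in `GFrobFS4` only a δ-hyperedge. -/
theorem GFrobFS3_not_iso_GFrobFS4 : IsEmpty (LCospanIso GFrobFS3 GFrobFS4) := by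
  refine ⟨fun φ => ?_⟩
  obtain ⟨e, he, hl⟩ := φ.exists_inp_mem_src (x := 0) (e := 2) (by decide)
  revert e
  unfold SFS
  decide

/-- **Non-confluence of the Frobenius semi-algebra system.**
`GFrob` is monogamous acyclic and admits convex DPO steps `GFrob ⇒ H₁` (by FS3)
and `GFrob ⇒ H₂` (by FS4) such that `H₁`, `H₂` admit no further convex DPO steps
for any FS rule, are not isomorphic as interfaced hypergraphs, and there is no
`K` with `H₁ ⇒* K` and `H₂ ⇒* K`. -/
theorem FS_not_confluent :
    MonAcyclic GFrob ∧
    ∃ H₁ H₂ : LCospan SFS (Fin 2) (Fin 2),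
      MonAcyclic H₁ ∧ MonAcyclic H₂ ∧
      ConvexStep FS3L FS34R GFrob H₁ ∧
      ConvexStep FS4L FS34R GFrob H₂ ∧
      (∀ K, ¬ StepFS H₁ K) ∧ (∀ K, ¬ StepFS H₂ K) ∧
      IsEmpty (LCospanIso H₁ H₂) ∧
      ¬ ∃ K, Relation.ReflTransGen StepFS H₁ K ∧ Relation.ReflTransGen StepFS H₂ K := by
  refine ⟨GFrob_monAcyclic, GFrobFS3, GFrobFS4, GFrobFS3_monAcyclic, GFrobFS4_monAcyclic,
    GFrob_convexStep_FS3, GFrob_convexStep_FS4, GFrobFS3_not_stepFS, GFrobFS4_not_stepFS,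
    GFrobFS3_not_iso_GFrobFS4, ?_⟩
  rintro ⟨K, h₃, h₄⟩
  rw [Relation.reflTransGen_iff_eq GFrobFS3_not_stepFS] at h₃
  rw [Relation.reflTransGen_iff_eq GFrobFS4_not_stepFS] at h₄
  subst h₃
  exact GFrobFS3_not_iso_GFrobFS4.false (h₄ ▸ LCospanIso.refl _)

end SDRT
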